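/- For all infinite cycles A and B and all n, the maximum degree of a vertex in the pedigree graph G_n^{AB} is at most 6. -/

import Mathlib

open MeasureTheory

/-- An infinite cycle: coordinate `i` represents the choice `c_{i+3} ∈ {1,…,i+3}`
(encoded as `Fin (i+3)`, with value `v` representing `v+1`). -/
abbrev InfCycle := ∀ i : ℕ, Fin (i + 3)

/-- The list of nodes of the cycle `A_n`, in positive direction starting at node 1.
`A_{n+1}` arises from `A_n` by inserting node `n+1` into the `c_n`-th edge. -/
def listOf (c : InfCycle) : ℕ → List ℕ
  | 0 => []
  | 1 => []
  | 2 => []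
  | 3 => [1, 2, 3]
  | (n + 4) => (listOf c (n + 3)).insertIdx ((c n).val + 1) (n + 4)

/-- The node following `x` in the cyclic order given by the list `l`. -/
def cyclicNext (l : List ℕ) (x : ℕ) : ℕ := (l.rotate 1).getD (l.idxOf x) 0

/-- The node preceding `x` in the cyclic order given by the list `l`. -/
def cyclicPrev (l : List ℕ) (x : ℕ) : ℕ := (l.rotate (l.length - 1)).getD (l.idxOf x) 0

/-- `ν⁺_A(k)`: the neighbor of `k` in `A_k` in positive direction. -/
def nuPlus (c : InfCycle) (k : ℕ) : ℕ :=
  if k ≤ 1 then 0 else if k = 2 then 1 else cyclicNext (listOf c k) k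

/-- `ν⁻_A(k)`: the neighbor of `k` in `A_k` in negative direction. -/
def nuMinus (c : InfCycle) (k : ℕ) : ℕ :=
  if k ≤ 1 then 0 else if k = 2 then 1 else cyclicPrev (listOf c k) k

/-- `ν_A(k) = {ν⁺_A(k), ν⁻_A(k)}`, the edge of `A_{k-1}` into which `k` was inserted. -/
def nuSet (c : InfCycle) (k : ℕ) : Finset ℕ := {nuPlus c k, nuMinus c k}

/-- The edges (as unordered pairs) of the cycle whose nodes, in cyclic order, are `l`. -/
def edgeList (l : List ℕ) : List (Finset ℕ) :=
  l.zipWith (fun x y => ({x, y} : Finset ℕ)) (l.rotate 1)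

/-- `E(A_n)`: the edge set of the cycle `A_n`. -/
def cycleEdges (c : InfCycle) (n : ℕ) : Finset (Finset ℕ) := (edgeList (listOf c n)).toFinset

/-- `k` is a vertex of the pedigree graph `G_n^{AB}`. -/
def isVertex (a b : InfCycle) (n k : ℕ) : Prop := 4 ≤ k ∧ k ≤ n ∧ nuSet a k ≠ nuSet b k

/-- The condition for an edge of the pedigree graph between vertices `k < m`
(type-1 A→B, type-1 B→A, type-2 A→B, type-2 B→A). -/
def edgeCond (a b : InfCycle) (k m : ℕ) : Prop :=
  nuSet a m = nuSet b k ∨ nuSet b m = nuSet a k ∨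
  (k = max (nuPlus a m) (nuMinus a m) ∧ nuSet b k ∩ nuSet a m = ∅) ∨
  (k = max (nuPlus b m) (nuMinus b m) ∧ nuSet a k ∩ nuSet b m = ∅)

/-- The pedigree graph `G_n^{AB}`, as a graph on `ℕ` (non-vertices are isolated). -/
def pedigreeGraph (a b : InfCycle) (n : ℕ) : SimpleGraph ℕ where
  Adj k m := isVertex a b n k ∧ isVertex a b n m ∧
    ((k < m ∧ edgeCond a b k m) ∨ (m < k ∧ edgeCond a b m k))
  symm := ⟨fun k m ⟨h1, h2, h3⟩ => ⟨h2, h1, h3.symm⟩⟩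
  loopless := ⟨fun k h => by rcases h.2.2 with ⟨h', _⟩ | ⟨h', _⟩ <;> exact absurd h' (lt_irrefl k)⟩

/-- The vertex set of the pedigree graph `G_n^{AB}`. -/
def vertexSet (a b : InfCycle) (n : ℕ) : Set ℕ := {k | isVertex a b n k}

/-- The pedigree graph `G_n^{AB}` on its vertex set. -/
def pGraph (a b : InfCycle) (n : ℕ) : SimpleGraph (vertexSet a b n) :=
  (pedigreeGraph a b n).induce (vertexSet a b n)

/-- The pedigree graph `G_n^{AB}` is connected. -/
def pConnected (a b : InfCycle) (n : ℕ) : Prop := (pGraph a b n).Connected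

/-- `T_n`: the number of connected components of the pedigree graph `G_n^{AB}`. -/
noncomputable def Tnum (a b : InfCycle) (n : ℕ) : ℕ :=
  Nat.card (pGraph a b n).ConnectedComponent

/-- `I_n`: at time `n`, the node `n` is added to the pedigree graph as an isolated vertex. -/
def isolatedAt (a b : InfCycle) (n : ℕ) : Prop :=
  isVertex a b n n ∧ ∀ k, ¬ (pedigreeGraph a b n).Adj n k

/-- The event that the first `m` coordinates (`c_3, …, c_{m+2}`) agree with those of `b₀`. -/
def prefixEvent (b₀ : InfCycle) (m : ℕ) : Set InfCycle := {b | ∀ j, j < m → b j = b₀ j}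

/-- `μ` is the distribution of a random infinite cycle: the product over `n ≥ 3` of the
uniform measures on `{1,…,n}`.  (This property determines `μ` uniquely.) -/
def IsCycleMeasure (μ : Measure InfCycle) : Prop :=
  IsProbabilityMeasure μ ∧
    ∀ (b₀ : InfCycle) (m : ℕ),
      μ (prefixEvent b₀ m) = ∏ j ∈ Finset.range m, ((j + 3 : ℕ) : ENNReal)⁻¹

/-- An Alice strategy: her choice at each time depends only on Bob's earlier choices. -/
structure AliceStrategy where
  play : InfCycle → InfCycle
  adapted : ∀ (b b' : InfCycle) (i : ℕ), (∀ j, j < i → b j = b' j) → play b i = play b' i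

/-- `S_n = |E(A_n) ∩ E(B_n)|`. -/
def Sval (a b : InfCycle) (n : ℕ) : ℕ := (cycleEdges a n ∩ cycleEdges b n).card

/-- `S*_n`: the number of common edges not incident on `ν_A(n+1)`. -/
def Sstar (a b : InfCycle) (n : ℕ) : ℕ :=
  ((cycleEdges a n ∩ cycleEdges b n).filter (fun e => e ∩ nuSet a (n + 1) = ∅)).card

/-- `R_n`: the number of edges of `B_n` that are not common and not incident on `ν_A(n+1)`. -/
def Rval (a b : InfCycle) (n : ℕ) : ℕ :=
  ((cycleEdges b n \ cycleEdges a n).filter (fun e => e ∩ nuSet a (n + 1) = ∅)).card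

/-- Alice's move at time `m` is a d-move: `ν_A(m) ∉ E^∩_{m-1}`. -/
def dMoveAt (a b : InfCycle) (m : ℕ) : Prop := nuSet a m ∉ cycleEdges b (m - 1)

/-- `Y`: the total number of times an isolated vertex is created in the pedigree graph. -/
noncomputable def Yval (a b : InfCycle) : ENNReal :=
  ∑' m : ℕ, Set.indicator {x : ℕ | isolatedAt a b x} (fun _ => 1) m

/-!
Every node `k ≥ 4` is inserted into an edge `ν(k)` of the current cycle, and that edge never
reappears, so `k ↦ ν_A(k)` is injective. An edge whose larger endpoint is `m ≥ 4` is one of the two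
edges `{m, ν^±(m)}` created when `m` was inserted. Hence, for a vertex `m` of `G_n^{AB}`:
* at most one `k` has `ν_B(k) = ν_A(m)` or is `max ν_A(m)` with `ν_B(k) ∩ ν_A(m) = ∅`; the two
  options exclude each other, because `ν_A(m)`, being then an edge of `B` with larger endpoint
  `max ν_A(m)`, meets `ν_B(max ν_A(m))`. The same holds with `A` and `B` swapped;
* at most two `k` have `max ν_A(k) = m`, and at most two have `max ν_B(k) = m`.
These `1 + 1 + 2 + 2` nodes include all neighbours of `m`.
-/

theorem Finset.pair_eq_pair_iff {α : Type*} [DecidableEq α] {x y z w : α} :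
    ({x, y} : Finset α) = {z, w} ↔ x = z ∧ y = w ∨ x = w ∧ y = z := by
  rw [← Finset.coe_inj, Finset.coe_pair, Finset.coe_pair, Set.pair_eq_pair_iff]

theorem add_one_mod_cases {i N : ℕ} (hi : i < N) :
    i + 1 < N ∧ (i + 1) % N = i + 1 ∨ i + 1 = N ∧ (i + 1) % N = 0 := by
  rcases (Nat.add_one_le_of_lt hi).lt_or_eq with h | h
  · exact .inl ⟨h, Nat.mod_eq_of_lt h⟩
  · exact .inr ⟨h, by rw [h, Nat.mod_self]⟩

section CyclicList

variable {l : List ℕ} {q v : ℕ}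

def edgeAt (l : List ℕ) (i : ℕ) : Finset ℕ := {l.getD i 0, l.getD ((i + 1) % l.length) 0}

theorem mem_edgeList_iff {e : Finset ℕ} : e ∈ edgeList l ↔ ∃ i < l.length, edgeAt l i = e := by
  simp only [edgeList, List.mem_iff_getElem, List.length_zipWith, List.length_rotate, min_self,
    List.getElem_zipWith, List.getElem_rotate, edgeAt]
  refine exists_congr fun i => ⟨fun ⟨hi, h⟩ => ⟨hi, ?_⟩, fun ⟨hi, h⟩ => ⟨hi, ?_⟩⟩ <;>
    rwa [List.getD_eq_getElem _ _ hi, List.getD_eq_getElem _ _ (Nat.mod_lt _ (by omega))] at *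

theorem mem_of_mem_edgeList {e : Finset ℕ} {x : ℕ} (he : e ∈ edgeList l) (hx : x ∈ e) :
    x ∈ l := by
  obtain ⟨i, hi, rfl⟩ := mem_edgeList_iff.mp he
  rw [edgeAt, Finset.mem_insert, Finset.mem_singleton, List.getD_eq_getElem _ _ hi,
    List.getD_eq_getElem _ _ (Nat.mod_lt _ (by omega))] at hx
  rcases hx with rfl | rfl <;> exact List.getElem_mem _

theorem edgeAt_injOn (hl : l.Nodup) (h3 : 3 ≤ l.length) :
    Set.InjOn (edgeAt l) (Set.Iio l.length) := by
  have hinj : ∀ i < l.length, ∀ j < l.length, l.getD i 0 = l.getD j 0 → i = j :=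
    fun i hi j hj h => by
      rwa [List.getD_eq_getElem _ _ hi, List.getD_eq_getElem _ _ hj, hl.getElem_inj_iff] at h
  intro i hi j hj h
  simp only [Set.mem_Iio] at hi hj
  rcases Finset.pair_eq_pair_iff.mp h with ⟨h1, -⟩ | ⟨h1, h2⟩
  · exact hinj i hi j hj h1
  · have := hinj _ hi _ (Nat.mod_lt _ (by omega)) h1
    have := hinj _ (Nat.mod_lt _ (by omega)) _ hj h2
    rcases add_one_mod_cases hi with ⟨_, _⟩ | ⟨_, _⟩ <;>
      rcases add_one_mod_cases hj with ⟨_, _⟩ | ⟨_, _⟩ <;> omega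

theorem getD_insertIdx (hq : q ≤ l.length) (j : ℕ) :
    (l.insertIdx q v).getD j 0 =
      if j < q then l.getD j 0 else if j = q then v else l.getD (j - 1) 0 := by
  simp only [List.getD_eq_getElem?_getD, List.getElem?_insertIdx]
  split_ifs <;> simp_all

theorem cyclicNext_of_mem {x : ℕ} (hx : x ∈ l) :
    cyclicNext l x = l.getD ((l.idxOf x + 1) % l.length) 0 := by
  have : l.idxOf x < l.length := List.idxOf_lt_length_of_mem hx
  rw [cyclicNext, List.getD_eq_getElem _ _ (by simpa), List.getElem_rotate, List.getD_eq_getElem]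

theorem cyclicPrev_of_mem {x : ℕ} (hx : x ∈ l) :
    cyclicPrev l x = l.getD ((l.idxOf x + (l.length - 1)) % l.length) 0 := by
  have : l.idxOf x < l.length := List.idxOf_lt_length_of_mem hx
  rw [cyclicPrev, List.getD_eq_getElem _ _ (by simpa), List.getElem_rotate, List.getD_eq_getElem]

theorem nodup_insertIdx (hl : l.Nodup) (hv : v ∉ l) (hq : q ≤ l.length) :
    (l.insertIdx q v).Nodup :=
  (List.perm_insertIdx v l hq).nodup_iff.mpr (List.nodup_cons.mpr ⟨hv, hl⟩)

theorem idxOf_insertIdx (hl : l.Nodup) (hv : v ∉ l) (hq : q ≤ l.length) :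
    (l.insertIdx q v).idxOf v = q := by
  have hlt : q < (l.insertIdx q v).length := by
    rw [List.length_insertIdx_of_le_length hq]; omega
  simpa [List.getElem_insertIdx_self hlt] using (nodup_insertIdx hl hv hq).idxOf_getElem q hlt

theorem cyclicNext_insertIdx (hl : l.Nodup) (hv : v ∉ l) (hq₁ : 1 ≤ q) (hq : q ≤ l.length) :
    cyclicNext (l.insertIdx q v) v = l.getD (q % l.length) 0 := by
  rw [cyclicNext_of_mem ((List.mem_insertIdx hq).mpr (.inl rfl)), idxOf_insertIdx hl hv hq,
    List.length_insertIdx_of_le_length hq, getD_insertIdx hq]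
  rcases add_one_mod_cases (Nat.lt_add_one_of_le hq) with ⟨h, hmod⟩ | ⟨h, hmod⟩
  · rw [hmod, Nat.mod_eq_of_lt (by omega)]; simp
  · rw [hmod, if_pos (by omega), show q = l.length by omega, Nat.mod_self]

theorem cyclicPrev_insertIdx (hl : l.Nodup) (hv : v ∉ l) (hq₁ : 1 ≤ q) (hq : q ≤ l.length) :
    cyclicPrev (l.insertIdx q v) v = l.getD (q - 1) 0 := by
  rw [cyclicPrev_of_mem ((List.mem_insertIdx hq).mpr (.inl rfl)), idxOf_insertIdx hl hv hq,
    List.length_insertIdx_of_le_length hq, getD_insertIdx hq, Nat.add_sub_cancel,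
    show q + l.length = q - 1 + 1 * (l.length + 1) by omega, Nat.add_mul_mod_self_right,
    Nat.mod_eq_of_lt (by omega), if_pos (by omega)]

theorem edgeAt_insertIdx_of_lt (hq : q ≤ l.length) {i : ℕ} (hi : i + 1 < q) :
    edgeAt (l.insertIdx q v) i = edgeAt l i := by
  rw [edgeAt, edgeAt, List.length_insertIdx_of_le_length hq, Nat.mod_eq_of_lt (by omega),
    Nat.mod_eq_of_lt (by omega), getD_insertIdx hq, getD_insertIdx hq, if_pos (by omega),
    if_pos hi]

theorem edgeAt_insertIdx_of_gt (hq₁ : 1 ≤ q) (hq : q ≤ l.length) {i : ℕ} (hqi : q < i)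
    (hi : i ≤ l.length) :
    edgeAt (l.insertIdx q v) i = edgeAt l (i - 1) := by
  rw [edgeAt, edgeAt, List.length_insertIdx_of_le_length hq, getD_insertIdx hq, getD_insertIdx hq,
    if_neg (by omega), if_neg (by omega), Nat.sub_add_cancel (by omega)]
  rcases add_one_mod_cases (Nat.lt_add_one_of_le hi) with ⟨h, hmod⟩ | ⟨h, hmod⟩
  · rw [hmod, Nat.mod_eq_of_lt (by omega), if_neg (by omega), if_neg (by omega),
      Nat.add_sub_cancel]
  · rw [hmod, if_pos (by omega), show i = l.length by omega, Nat.mod_self]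

theorem edgeAt_mem_edgeList {i : ℕ} (hi : i < l.length) : edgeAt l i ∈ edgeList l :=
  mem_edgeList_iff.mpr ⟨i, hi, rfl⟩

theorem pair_cyclicNext_cyclicPrev_mem_edgeList (hl : l.Nodup) (hv : v ∉ l) (hq₁ : 1 ≤ q)
    (hq : q ≤ l.length) :
    {cyclicNext (l.insertIdx q v) v, cyclicPrev (l.insertIdx q v) v} ∈ edgeList l := by
  rw [cyclicNext_insertIdx hl hv hq₁ hq, cyclicPrev_insertIdx hl hv hq₁ hq, Finset.pair_comm]
  have := edgeAt_mem_edgeList (l := l) (i := q - 1) (by omega)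
  rwa [edgeAt, Nat.sub_add_cancel hq₁] at this

theorem mem_edgeList_insertIdx (hl : l.Nodup) (h3 : 3 ≤ l.length) (hv : v ∉ l) (hq₁ : 1 ≤ q)
    (hq : q ≤ l.length) {e : Finset ℕ} (he : e ∈ edgeList (l.insertIdx q v)) :
    e = {cyclicPrev (l.insertIdx q v) v, v} ∨ e = {v, cyclicNext (l.insertIdx q v) v} ∨
      e ∈ edgeList l ∧ e ≠ {cyclicNext (l.insertIdx q v) v, cyclicPrev (l.insertIdx q v) v} := by
  have hold : ∀ j < l.length, j ≠ q - 1 → edgeAt l j ∈ edgeList l ∧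
      edgeAt l j ≠ {cyclicNext (l.insertIdx q v) v, cyclicPrev (l.insertIdx q v) v} := by
    intro j hj hjq
    refine ⟨edgeAt_mem_edgeList hj,
      fun h => hjq (edgeAt_injOn hl h3 hj (Set.mem_Iio.mpr (by omega)) ?_)⟩
    rw [h, cyclicNext_insertIdx hl hv hq₁ hq, cyclicPrev_insertIdx hl hv hq₁ hq, edgeAt,
      Finset.pair_comm, Nat.sub_add_cancel hq₁]
  obtain ⟨i, hi, rfl⟩ := mem_edgeList_iff.mp he
  rw [List.length_insertIdx_of_le_length hq] at hi
  rcases lt_trichotomy (i + 1) q with hiq | hiq | hiq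
  · exact .inr (.inr (edgeAt_insertIdx_of_lt hq hiq ▸ hold i (by omega) (by omega)))
  · left
    rw [cyclicPrev_insertIdx hl hv hq₁ hq, edgeAt, getD_insertIdx hq, getD_insertIdx hq,
      List.length_insertIdx_of_le_length hq, Nat.mod_eq_of_lt (by omega), if_pos (by omega),
      if_neg (by omega), if_pos hiq, ← hiq, Nat.add_sub_cancel]
  · rcases (Nat.le_of_lt_succ hiq).eq_or_lt with rfl | hqi
    · right; left
      rw [edgeAt, cyclicNext_of_mem ((List.mem_insertIdx hq).mpr (.inl rfl)),
        idxOf_insertIdx hl hv hq, getD_insertIdx hq, if_neg (by omega), if_pos rfl]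
    · exact .inr (.inr (edgeAt_insertIdx_of_gt hq₁ hq hqi (by omega) ▸
        hold (i - 1) (by omega) (by omega)))

end CyclicList

section Cycle

variable (c : InfCycle)

theorem listOf_succ (n : ℕ) :
    listOf c (n + 4) = (listOf c (n + 3)).insertIdx ((c n).val + 1) (n + 4) := rfl

theorem length_listOf (n : ℕ) : (listOf c (n + 3)).length = n + 3 := by
  induction n with
  | zero => rfl
  | succ n ih =>
    show (listOf c (n + 4)).length = n + 4
    rw [listOf_succ, List.length_insertIdx_of_le_length (by have := (c n).isLt; omega), ih]

theorem val_add_one_le_length_listOf (n : ℕ) : (c n).val + 1 ≤ (listOf c (n + 3)).length := by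
  rw [length_listOf]; exact (c n).isLt

theorem le_of_mem_listOf : ∀ {n x : ℕ}, x ∈ listOf c n → x ≤ n
  | 0, _, hx | 1, _, hx | 2, _, hx => by simp [listOf] at hx
  | 3, _, hx => by simp [listOf] at hx; omega
  | n + 4, _, hx => by
    rcases (List.mem_insertIdx (val_add_one_le_length_listOf c n)).mp hx with rfl | h
    · exact le_rfl
    · exact (le_of_mem_listOf h).trans (by omega)

theorem nodup_listOf (n : ℕ) : (listOf c (n + 3)).Nodup := by
  induction n with
  | zero => simp [listOf]
  | succ n ih =>
    exact nodup_insertIdx ih (fun h => by have := le_of_mem_listOf c h; omega)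
      (val_add_one_le_length_listOf c n)

theorem notMem_listOf (n : ℕ) : n + 4 ∉ listOf c (n + 3) :=
  fun h => by have := le_of_mem_listOf c h; omega

theorem three_le_length_listOf (n : ℕ) : 3 ≤ (listOf c (n + 3)).length := by
  rw [length_listOf]; omega

theorem nuPlus_eq_cyclicNext (n : ℕ) :
    nuPlus c (n + 4) = cyclicNext (listOf c (n + 4)) (n + 4) := by
  simp [nuPlus]

theorem nuMinus_eq_cyclicPrev (n : ℕ) :
    nuMinus c (n + 4) = cyclicPrev (listOf c (n + 4)) (n + 4) := by
  simp [nuMinus]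

theorem nuSet_mem_cycleEdges (n : ℕ) : nuSet c (n + 4) ∈ cycleEdges c (n + 3) := by
  rw [nuSet, nuPlus_eq_cyclicNext, nuMinus_eq_cyclicPrev, cycleEdges, List.mem_toFinset,
    listOf_succ]
  exact pair_cyclicNext_cyclicPrev_mem_edgeList (nodup_listOf c n) (notMem_listOf c n)
    (Nat.le_add_left 1 _) (val_add_one_le_length_listOf c n)

theorem mem_cycleEdges_succ {n : ℕ} {e : Finset ℕ} (he : e ∈ cycleEdges c (n + 4)) :
    e = {nuMinus c (n + 4), n + 4} ∨ e = {n + 4, nuPlus c (n + 4)} ∨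
      e ∈ cycleEdges c (n + 3) ∧ e ≠ nuSet c (n + 4) := by
  rw [cycleEdges, List.mem_toFinset, listOf_succ] at he
  rw [nuSet, nuPlus_eq_cyclicNext, nuMinus_eq_cyclicPrev, cycleEdges, List.mem_toFinset,
    listOf_succ]
  exact mem_edgeList_insertIdx (nodup_listOf c n) (three_le_length_listOf c n)
    (notMem_listOf c n) (Nat.le_add_left 1 _) (val_add_one_le_length_listOf c n) he

theorem le_of_mem_cycleEdges {n x : ℕ} {e : Finset ℕ} (he : e ∈ cycleEdges c n) (hx : x ∈ e) :
    x ≤ n :=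
  le_of_mem_listOf c (mem_of_mem_edgeList (List.mem_toFinset.mp he) hx)

theorem lt_of_mem_nuSet {n x : ℕ} (hx : x ∈ nuSet c (n + 4)) : x < n + 4 :=
  Nat.lt_succ_of_le (le_of_mem_cycleEdges c (nuSet_mem_cycleEdges c n) hx)

theorem nuSet_notMem_cycleEdges {k j : ℕ} (hk : 4 ≤ k) (hkj : k ≤ j) :
    nuSet c k ∉ cycleEdges c j := by
  obtain ⟨k, rfl⟩ : ∃ i, k = i + 4 := ⟨k - 4, by omega⟩
  have hnew : ∀ m, k + 4 ≤ m → m ∉ nuSet c (k + 4) := fun m hm h =>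
    (lt_of_mem_nuSet c h).not_ge hm
  induction j, hkj using Nat.le_induction with
  | base =>
    intro h
    rcases mem_cycleEdges_succ c h with h | h | ⟨-, h⟩
    · exact hnew _ le_rfl (h ▸ by simp)
    · exact hnew _ le_rfl (h ▸ by simp)
    · exact h rfl
  | succ j hkj ih =>
    obtain ⟨i, rfl⟩ : ∃ i, j = i + 3 := ⟨j - 3, by omega⟩
    intro h
    rcases mem_cycleEdges_succ c (n := i) h with h | h | ⟨h, -⟩
    · exact hnew (i + 4) (by omega) (h ▸ by simp)
    · exact hnew (i + 4) (by omega) (h ▸ by simp)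
    · exact ih h

theorem nuSet_injOn : Set.InjOn (nuSet c) (Set.Ici 4) := by
  intro k (hk : 4 ≤ k) k' (hk' : 4 ≤ k') h
  by_contra hne
  wlog hlt : k < k' generalizing k k'
  · exact this hk' hk h.symm (Ne.symm hne) (by omega)
  obtain ⟨i, rfl⟩ : ∃ i, k' = i + 4 := ⟨k' - 4, by omega⟩
  exact nuSet_notMem_cycleEdges c hk (by omega) (h ▸ nuSet_mem_cycleEdges c i)

theorem isGreatest_max_nuSet (k : ℕ) :
    IsGreatest (nuSet c k : Set ℕ) (max (nuPlus c k) (nuMinus c k)) := by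
  simpa [nuSet] using isGreatest_pair

theorem eq_pair_of_isGreatest_of_mem_cycleEdges {j m : ℕ} {e : Finset ℕ} (hm : 4 ≤ m)
    (he : e ∈ cycleEdges c j) (hmax : IsGreatest (e : Set ℕ) m) :
    e = {m, nuPlus c m} ∨ e = {m, nuMinus c m} := by
  induction j with
  | zero => exact absurd (le_of_mem_cycleEdges c he hmax.1) (by omega)
  | succ j ih =>
    obtain ⟨i, rfl⟩ : ∃ i, j = i + 3 := ⟨j - 3, by
      have := le_of_mem_cycleEdges c he hmax.1; omega⟩
    have hnew : ∀ x ∈ nuSet c (i + 4),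
        IsGreatest (({x, i + 4} : Finset ℕ) : Set ℕ) m → m = i + 4 := fun x hx h => by
        rw [Finset.coe_pair] at h
        rw [h.unique isGreatest_pair, max_eq_right (lt_of_mem_nuSet c hx).le]
    rcases mem_cycleEdges_succ c he with rfl | rfl | ⟨hold, -⟩
    · right
      rw [hnew _ (by simp [nuSet]) hmax, Finset.pair_comm]
    · left
      rw [Finset.pair_comm] at hmax
      rw [hnew _ (by simp [nuSet]) hmax]
    · exact ih hold

end Cycle

theorem nuSet_inter_nonempty_of_isGreatest {c : InfCycle} {j m : ℕ} {e : Finset ℕ} (hm : 4 ≤ m)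
    (he : e ∈ cycleEdges c j) (hmax : IsGreatest (e : Set ℕ) m) : (nuSet c m ∩ e).Nonempty := by
  rcases eq_pair_of_isGreatest_of_mem_cycleEdges c hm he hmax with rfl | rfl
  · exact ⟨nuPlus c m, by simp [nuSet]⟩
  · exact ⟨nuMinus c m, by simp [nuSet]⟩

theorem nuSet_ne_of_max_of_inter_eq_empty {c d : InfCycle} {k k₀ m : ℕ} (hk : 4 ≤ k)
    (hk₀ : 4 ≤ k₀) (hmax : k₀ = max (nuPlus c m) (nuMinus c m))
    (hdisj : nuSet d k₀ ∩ nuSet c m = ∅) :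
    nuSet d k ≠ nuSet c m := by
  intro h
  obtain ⟨i, rfl⟩ : ∃ i, k = i + 4 := ⟨k - 4, by omega⟩
  have := nuSet_inter_nonempty_of_isGreatest hk₀ (h ▸ nuSet_mem_cycleEdges d i)
    (hmax ▸ isGreatest_max_nuSet c m)
  rw [hdisj] at this
  exact Finset.not_nonempty_empty this

def edgePartners (c d : InfCycle) (m : ℕ) : Set ℕ :=
  {k | 4 ≤ k ∧ (nuSet d k = nuSet c m ∨
    k = max (nuPlus c m) (nuMinus c m) ∧ nuSet d k ∩ nuSet c m = ∅)}

def maxParentFiber (c : InfCycle) (m : ℕ) : Set ℕ :=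
  {k | 4 ≤ k ∧ m = max (nuPlus c k) (nuMinus c k)}

theorem edgePartners_subsingleton (c d : InfCycle) (m : ℕ) :
    (edgePartners c d m).Subsingleton := by
  rintro k ⟨hk, h | ⟨hmax, hdisj⟩⟩ k' ⟨hk', h' | ⟨hmax', hdisj'⟩⟩
  · exact nuSet_injOn d hk hk' (h.trans h'.symm)
  · exact absurd h (nuSet_ne_of_max_of_inter_eq_empty hk hk' hmax' hdisj')
  · exact absurd h' (nuSet_ne_of_max_of_inter_eq_empty hk' hk hmax hdisj)
  · exact hmax.trans hmax'.symm

theorem encard_maxParentFiber_le (c : InfCycle) {m : ℕ} (hm : 4 ≤ m) :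
    (maxParentFiber c m).encard ≤ 2 := by
  have hmaps : Set.MapsTo (nuSet c) (maxParentFiber c m) {{m, nuPlus c m}, {m, nuMinus c m}} :=
    fun k ⟨hk, hmax⟩ => by
      obtain ⟨i, rfl⟩ : ∃ i, k = i + 4 := ⟨k - 4, by omega⟩
      exact eq_pair_of_isGreatest_of_mem_cycleEdges c hm (nuSet_mem_cycleEdges c i)
        (hmax ▸ isGreatest_max_nuSet c _)
  calc (maxParentFiber c m).encard
      ≤ ({{m, nuPlus c m}, {m, nuMinus c m}} : Set (Finset ℕ)).encard :=
        Set.encard_le_encard_of_injOn hmaps ((nuSet_injOn c).mono fun k hk => hk.1)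
    _ ≤ 2 := (Set.encard_insert_le _ _).trans (by rw [Set.encard_singleton]; rfl)

theorem setOf_pedigreeGraph_adj_subset (a b : InfCycle) (n m : ℕ) :
    {k | (pedigreeGraph a b n).Adj m k} ⊆
      edgePartners a b m ∪ edgePartners b a m ∪ (maxParentFiber a m ∪ maxParentFiber b m) := by
  rintro k ⟨-, ⟨hk, -⟩, ⟨-, h | h | h | h⟩ | ⟨-, h | h | h | h⟩⟩
  · exact .inl (.inr ⟨hk, .inl h⟩)
  · exact .inl (.inl ⟨hk, .inl h⟩)
  · exact .inr (.inl ⟨hk, h.1⟩)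
  · exact .inr (.inr ⟨hk, h.1⟩)
  · exact .inl (.inl ⟨hk, .inl h.symm⟩)
  · exact .inl (.inr ⟨hk, .inl h.symm⟩)
  · exact .inl (.inl ⟨hk, .inr h⟩)
  · exact .inl (.inr ⟨hk, .inr h⟩)

theorem encard_setOf_pedigreeGraph_adj_le (a b : InfCycle) (n m : ℕ) :
    {k | (pedigreeGraph a b n).Adj m k}.encard ≤ 6 := by
  by_cases hm : 4 ≤ m
  · calc {k | (pedigreeGraph a b n).Adj m k}.encard
        ≤ (edgePartners a b m ∪ edgePartners b a m ∪
            (maxParentFiber a m ∪ maxParentFiber b m)).encard :=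
          Set.encard_le_encard (setOf_pedigreeGraph_adj_subset a b n m)
      _ ≤ (edgePartners a b m).encard + (edgePartners b a m).encard +
            ((maxParentFiber a m).encard + (maxParentFiber b m).encard) := by
        grw [Set.encard_union_le, Set.encard_union_le, Set.encard_union_le]
      _ ≤ 1 + 1 + (2 + 2) := by
        gcongr
        · exact Set.encard_le_one_iff_subsingleton.mpr (edgePartners_subsingleton a b m)
        · exact Set.encard_le_one_iff_subsingleton.mpr (edgePartners_subsingleton b a m)
        · exact encard_maxParentFiber_le a hm
        · exact encard_maxParentFiber_le b hm
      _ = 6 := by norm_num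
  · rw [Set.encard_eq_zero.mpr (Set.eq_empty_of_forall_notMem fun k hk => hm hk.1.1)]
    simp

/-- The maximum degree of a vertex in a pedigree graph is at most 6. -/
theorem pedigree_graph_degree_le_six (a b : InfCycle) (n m : ℕ) :
    {k : ℕ | (pedigreeGraph a b n).Adj m k}.Finite ∧
    {k : ℕ | (pedigreeGraph a b n).Adj m k}.ncard ≤ 6 := by
  have hdeg := encard_setOf_pedigreeGraph_adj_le a b n m
  have hfin : {k : ℕ | (pedigreeGraph a b n).Adj m k}.Finite := Set.finite_of_encard_le_coe hdeg
  exact ⟨hfin, by rw [← Nat.cast_le (α := ℕ∞), hfin.cast_ncard_eq]; exact hdeg⟩
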